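/- Fix d ≥ 1, ν > 0, ε > 0 and γ ∈ ℝ. Let g : ℝ → ℝ^d be any function and let C : ℝ → Matrix (Fin d) (Fin d) ℝ be differentiable with C(t) symmetric for every t and with derivative C'(t) = g(t)⊗g(t) - ν(‖C(t)‖_F² + ε)^{(γ-2)/2} • C(t) for all t ≥ 0, where g⊗g denotes the rank-one matrix with entries g_i g_j and ‖·‖_F is the Frobenius norm. If C(0) is positive semi-definite, then C(t) is positive semi-definite for all t ≥ 0, i.e. ξᵀC(t)ξ ≥ 0 for every ξ ∈ ℝ^d and t ≥ 0. -/

import Mathlib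

/-!
Along the flow, the quadratic form `z(t) = ξᵀ C(t) ξ` satisfies `z' = (g · ξ)² - a z` with a rate
`a = ν (‖C‖_F² + ε)^((γ-2)/2) ≥ 0`, so `z' ≥ 0` wherever `z ≤ 0`: the half-line `z ≥ 0` is a barrier
that the trajectory, starting inside it, cannot leave.
-/

open Matrix Set

/-- The squared Frobenius norm of a real matrix. -/
def frobSq {d : ℕ} (A : Matrix (Fin d) (Fin d) ℝ) : ℝ :=
  ∑ i, ∑ j, (A i j) ^ 2

theorem nonneg_of_deriv_right_nonneg_of_nonpos {z z' : ℝ → ℝ} {a b : ℝ}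
    (hz : ContinuousOn z (Icc a b)) (hz' : ∀ x ∈ Ico a b, HasDerivWithinAt z (z' x) (Ici x) x)
    (ha : 0 ≤ z a) (hbarrier : ∀ x ∈ Ico a b, z x ≤ 0 → 0 ≤ z' x) :
    ∀ ⦃x⦄, x ∈ Icc a b → 0 ≤ z x := by
  intro x hx
  -- Fence `-z` by the lines `r (x - a)`, which `-z` can only touch where `z ≤ 0`, then let `r → 0`.
  have hfence : ∀ r > 0, -z x ≤ r * (x - a) := fun r hr =>
    image_le_of_deriv_right_lt_deriv_boundary hz.neg (fun y hy => (hz' y hy).neg)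
      (by simpa using ha) (fun y => ((hasDerivAt_id y).sub_const a).const_mul r)
      (fun y hy hzy => by
        simp only [Pi.neg_apply, id] at hzy
        have := hbarrier y hy (by nlinarith [hy.1])
        simp only [mul_one]
        linarith) hx
  refine neg_nonpos.mp (le_of_forall_pos_le_add fun δ hδ => ?_)
  have hxa : 0 ≤ x - a := sub_nonneg.mpr hx.1
  calc -z x ≤ δ / (x - a + 1) * (x - a) := hfence _ (by positivity)
    _ ≤ 0 + δ := by
      rw [zero_add, div_mul_eq_mul_div, div_le_iff₀ (by positivity)]
      nlinarith

theorem hasDerivAt_dotProduct_mulVec {n : Type*} [Fintype n] {C : ℝ → Matrix n n ℝ}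
    {C' : Matrix n n ℝ} {t : ℝ} (hC : ∀ i j, HasDerivAt (fun s => C s i j) (C' i j) t)
    (ξ : n → ℝ) : HasDerivAt (fun s => ξ ⬝ᵥ C s *ᵥ ξ) (ξ ⬝ᵥ C' *ᵥ ξ) t := by
  simp only [dotProduct, mulVec]
  exact HasDerivAt.fun_sum fun i _ =>
    (HasDerivAt.fun_sum fun j _ => (hC i j).mul_const (ξ j)).const_mul (ξ i)

theorem dotProduct_vecMulVec_sub_smul_mulVec {n : Type*} [Fintype n] (v ξ : n → ℝ) (c : ℝ)
    (A : Matrix n n ℝ) :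
    ξ ⬝ᵥ (vecMulVec v v - c • A) *ᵥ ξ = (v ⬝ᵥ ξ) ^ 2 - c * (ξ ⬝ᵥ A *ᵥ ξ) := by
  rw [sub_mulVec, vecMulVec_mulVec, smul_mulVec, dotProduct_sub, dotProduct_smul, dotProduct_smul]
  simp only [MulOpposite.smul_eq_mul_unop, MulOpposite.unop_op, smul_eq_mul, dotProduct_comm ξ v]
  ring

theorem frobSq_nonneg {d : ℕ} (A : Matrix (Fin d) (Fin d) ℝ) : 0 ≤ frobSq A :=
  Finset.sum_nonneg fun _ _ => Finset.sum_nonneg fun _ _ => sq_nonneg _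

theorem posSemidef_preserved_gradient_flow_general
    (d : ℕ) (ν ε γ : ℝ) (hν : 0 < ν) (hε : 0 < ε)
    (g : ℝ → (Fin d → ℝ)) (C : ℝ → Matrix (Fin d) (Fin d) ℝ)
    (hderiv : ∀ t ≥ (0 : ℝ), ∀ i j,
      HasDerivAt (fun s => C s i j)
        ((Matrix.vecMulVec (g t) (g t)
          - (ν * (frobSq (C t) + ε) ^ ((γ - 2) / 2)) • C t) i j) t)
    (h0 : (C 0).PosSemidef) :
    ∀ t ≥ (0 : ℝ), ∀ ξ : Fin d → ℝ, 0 ≤ ξ ⬝ᵥ (C t).mulVec ξ := by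
  intro t ht ξ
  set rate : ℝ → ℝ := fun s => ν * (frobSq (C s) + ε) ^ ((γ - 2) / 2)
  have hrate : ∀ s, 0 ≤ rate s := fun s =>
    mul_nonneg hν.le (Real.rpow_nonneg (by linarith [frobSq_nonneg (C s)]) _)
  have hz : ∀ s ≥ (0 : ℝ), HasDerivAt (fun s => ξ ⬝ᵥ C s *ᵥ ξ)
      ((g s ⬝ᵥ ξ) ^ 2 - rate s * (ξ ⬝ᵥ C s *ᵥ ξ)) s := fun s hs => by
    rw [← dotProduct_vecMulVec_sub_smul_mulVec]
    exact hasDerivAt_dotProduct_mulVec (hderiv s hs) ξ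
  refine nonneg_of_deriv_right_nonneg_of_nonpos
    (fun s hs => (hz s hs.1).continuousAt.continuousWithinAt)
    (fun s hs => (hz s hs.1).hasDerivWithinAt) (h0.dotProduct_mulVec_nonneg ξ)
    (fun s _ hzs => ?_) ⟨ht, le_rfl⟩
  nlinarith [sq_nonneg (g s ⬝ᵥ ξ), mul_nonpos_of_nonneg_of_nonpos (hrate s) hzs]

/-- Preservation of positive semi-definiteness along the gradient flow
`C' = g ⊗ g - ν (‖C‖_F² + ε)^((γ-2)/2) • C`. -/
theorem posSemidef_preserved_gradient_flow
    (d : ℕ) (hd : 1 ≤ d) (ν ε γ : ℝ) (hν : 0 < ν) (hε : 0 < ε)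
    (g : ℝ → (Fin d → ℝ)) (C : ℝ → Matrix (Fin d) (Fin d) ℝ)
    (hdiff : ∀ i j, Differentiable ℝ fun t => C t i j)
    (hsymm : ∀ t, (C t).IsSymm)
    (hderiv : ∀ t ≥ (0 : ℝ), ∀ i j,
      HasDerivAt (fun s => C s i j)
        ((Matrix.vecMulVec (g t) (g t)
          - (ν * (frobSq (C t) + ε) ^ ((γ - 2) / 2)) • C t) i j) t)
    (h0 : (C 0).PosSemidef) :
    ∀ t ≥ (0 : ℝ), ∀ ξ : Fin d → ℝ, 0 ≤ ξ ⬝ᵥ (C t).mulVec ξ :=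
  posSemidef_preserved_gradient_flow_general d ν ε γ hν hε g C hderiv h0
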